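/- Let F : [0,1] → ℝ be twice continuously differentiable on [0,1]. For t ≥ 1 and z ∈ ℝ let θ(z;t) = 1/2 − (z/2)/√(z² + t) and define R(z;t) = F(θ(z;t)) − F(1/2) − F'(1/2)·θ'(0;t)·z, where θ'(0;t) = −1/(2√t). Then ∫_{−∞}^{∞} t·R(z;t)·φ(z) dz → (1/8)·F''(1/2) as t → ∞, where φ is the standard normal density. -/

import Mathlib

open MeasureTheory Filter Topology
open Set Real

/-- Quadratic Taylor bound on a convex set from a uniform bound on `|f'' - c|`. -/
lemma key_taylor {s : Set ℝ} (hs : Convex ℝ s) {f g g' : ℝ → ℝ} {x₀ c K : ℝ} (hx₀ : x₀ ∈ s)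
    (hf : ∀ x ∈ s, HasDerivAt f (g x) x)
    (hg : ∀ x ∈ s, HasDerivAt g (g' x) x)
    (hK : ∀ x ∈ s, |g' x - c| ≤ K) :
    ∀ x ∈ s, |f x - f x₀ - g x₀ * (x - x₀) - c/2 * (x - x₀)^2| ≤ K * (x - x₀)^2 := by
  have step1 : ∀ x ∈ s, |g x - g x₀ - c * (x - x₀)| ≤ K * |x - x₀| := by
    intro x hx
    have h1 : ∀ y ∈ s, HasDerivWithinAt (fun y => g y - c * (y - x₀)) (g' y - c) s y := by
      intro y hy
      have h0 : HasDerivAt (fun y => g y - c * (y - x₀)) (g' y - c * 1) y :=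
        (hg y hy).sub (((hasDerivAt_id y).sub_const x₀).const_mul c)
      simpa using h0.hasDerivWithinAt
    have := hs.norm_image_sub_le_of_norm_hasDerivWithin_le h1
      (fun y hy => by simpa using hK y hy) hx₀ hx
    have h2 : g x - g x₀ - c * (x - x₀) = (g x - c * (x - x₀)) - (g x₀ - c * (x₀ - x₀)) := by
      ring
    rw [h2]
    simpa [Real.norm_eq_abs] using this
  intro x hx
  have hu : Set.uIcc x₀ x ⊆ s := hs.ordConnected.uIcc_subset hx₀ hx
  have hΦ : ∀ y ∈ Set.uIcc x₀ x,
      HasDerivWithinAt (fun y => f y - g x₀ * (y - x₀) - c/2 * (y - x₀)^2)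
        (g y - g x₀ - c * (y - x₀)) (Set.uIcc x₀ x) y := by
    intro y hy
    have h0 : HasDerivAt (fun y => f y - g x₀ * (y - x₀) - c/2 * (y - x₀)^2)
        (g y - g x₀ * 1 - c/2 * (2 * (y - x₀)^1 * 1)) y := by
      exact ((hf y (hu hy)).sub (((hasDerivAt_id y).sub_const x₀).const_mul (g x₀))).sub
        ((((hasDerivAt_id y).sub_const x₀).pow 2).const_mul (c/2))
    have : g y - g x₀ * 1 - c/2 * (2 * (y - x₀)^1 * 1) = g y - g x₀ - c * (y - x₀) := by ring
    rw [this] at h0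
    exact h0.hasDerivWithinAt
  have hbd : ∀ y ∈ Set.uIcc x₀ x, ‖g y - g x₀ - c * (y - x₀)‖ ≤ K * |x - x₀| := by
    intro y hy
    have h1 := step1 y (hu hy)
    have h2 : |y - x₀| ≤ |x - x₀| := abs_sub_left_of_mem_uIcc hy
    have hK0 : 0 ≤ K := le_trans (abs_nonneg _) (hK x₀ hx₀)
    calc ‖g y - g x₀ - c * (y - x₀)‖ ≤ K * |y - x₀| := h1
      _ ≤ K * |x - x₀| := by nlinarith
  have := (convex_uIcc x₀ x).norm_image_sub_le_of_norm_hasDerivWithin_le hΦ hbd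
    left_mem_uIcc right_mem_uIcc
  have h3 : f x - f x₀ - g x₀ * (x - x₀) - c/2 * (x - x₀)^2 =
      (f x - g x₀ * (x - x₀) - c/2 * (x - x₀)^2) -
      (f x₀ - g x₀ * (x₀ - x₀) - c/2 * (x₀ - x₀)^2) := by ring
  rw [h3]
  calc ‖_‖ ≤ K * |x - x₀| * ‖x - x₀‖ := this
    _ = K * (x - x₀)^2 := by rw [Real.norm_eq_abs, mul_assoc, abs_mul_abs_self, sq]

lemma integrable_poly_gauss (n : ℕ) : Integrable (fun x : ℝ => x ^ n * Real.exp (-(x^2) / 2)) := by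
  have h := integrable_rpow_mul_exp_neg_mul_sq (b := (1:ℝ)/2) (by norm_num) (s := n)
    (lt_of_lt_of_le neg_one_lt_zero (Nat.cast_nonneg n))
  have : (fun x : ℝ => x ^ (n:ℝ) * Real.exp (-(1/2:ℝ) * x ^ 2))
      = fun x : ℝ => x ^ n * Real.exp (-(x^2) / 2) := by
    funext x
    rw [Real.rpow_natCast]
    ring_nf
  rwa [this] at h

lemma integrable_exp_gauss : Integrable (fun x : ℝ => Real.exp (-(x^2) / 2)) := by
  have h := integrable_exp_neg_mul_sq (b := (1:ℝ)/2) (by norm_num)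
  have : (fun x : ℝ => Real.exp (-(1/2:ℝ) * x ^ 2)) = fun x : ℝ => Real.exp (-(x^2) / 2) := by
    funext x; ring_nf
  rwa [this] at h

lemma integral_sq_exp_gauss : ∫ x : ℝ, x ^ 2 * Real.exp (-(x^2)/2) = Real.sqrt (2 * π) := by
  have hd : ∀ x : ℝ, HasDerivAt (fun x : ℝ => -x * Real.exp (-(x^2)/2))
      ((x^2 - 1) * Real.exp (-(x^2)/2)) x := by
    intro x
    have h1 : HasDerivAt (fun x : ℝ => -(x^2)/2) (-x) x := by
      have := ((hasDerivAt_pow 2 x).neg).div_const 2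
      simpa using this.congr_deriv (by push_cast; ring)
    have h2 : HasDerivAt (fun x : ℝ => Real.exp (-(x^2)/2)) (Real.exp (-(x^2)/2) * (-x)) x :=
      h1.exp
    have h3 := ((hasDerivAt_id x).neg).mul h2
    exact h3.congr_deriv (by simp only [Pi.neg_apply, id]; ring)
  have hint : Integrable (fun x : ℝ => (x^2 - 1) * Real.exp (-(x^2)/2)) := by
    have : (fun x : ℝ => (x^2 - 1) * Real.exp (-(x^2)/2))
        = fun x : ℝ => x^2 * Real.exp (-(x^2)/2) - Real.exp (-(x^2)/2) := by
      funext x; ring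
    rw [this]
    exact (integrable_poly_gauss 2).sub integrable_exp_gauss
  have hintf : Integrable (fun x : ℝ => -x * Real.exp (-(x^2)/2)) := by
    have : (fun x : ℝ => -x * Real.exp (-(x^2)/2))
        = fun x : ℝ => -(x^1 * Real.exp (-(x^2)/2)) := by funext x; ring
    rw [this]
    exact (integrable_poly_gauss 1).neg
  have hz := integral_eq_zero_of_hasDerivAt_of_integrable hd hint hintf
  have hsub : ∫ x : ℝ, (x^2 - 1) * Real.exp (-(x^2)/2)
      = (∫ x : ℝ, x^2 * Real.exp (-(x^2)/2)) - ∫ x : ℝ, Real.exp (-(x^2)/2) := by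
    rw [← integral_sub (integrable_poly_gauss 2) integrable_exp_gauss]
    congr 1; funext x; ring
  have hg : ∫ x : ℝ, Real.exp (-(x^2)/2) = Real.sqrt (2 * π) := by
    have := integral_gaussian (1/2)
    have heq : (fun x : ℝ => Real.exp (-(1/2:ℝ) * x ^ 2)) = fun x : ℝ => Real.exp (-(x^2)/2) := by
      funext x; ring_nf
    rw [heq] at this
    rw [this, show π/(1/2) = 2*π by ring]
  rw [hsub, hg] at hz
  linarith

section facts
variable {F : ℝ → ℝ} (hF : ContDiffOn ℝ 2 F (Set.Icc 0 1))

lemma hasDerivAt_of_mem_Ioo (hF : ContDiffOn ℝ 2 F (Set.Icc 0 1)) :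
    ∀ x ∈ Set.Ioo (0:ℝ) 1, HasDerivAt F (deriv F x) x := by
  intro x hx
  have hFs : ContDiffOn ℝ 2 F (Set.Ioo 0 1) := hF.mono Set.Ioo_subset_Icc_self
  exact ((hFs.differentiableOn (by norm_num)).differentiableAt
    (isOpen_Ioo.mem_nhds hx)).hasDerivAt

lemma hasDerivAt_deriv_of_mem_Ioo (hF : ContDiffOn ℝ 2 F (Set.Icc 0 1)) :
    ∀ x ∈ Set.Ioo (0:ℝ) 1, HasDerivAt (deriv F) (deriv (deriv F) x) x := by
  intro x hx
  have hFs : ContDiffOn ℝ 2 F (Set.Ioo 0 1) := hF.mono Set.Ioo_subset_Icc_self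
  have hdF : ContDiffOn ℝ 1 (deriv F) (Set.Ioo 0 1) :=
    hFs.deriv_of_isOpen isOpen_Ioo (by norm_num)
  exact ((hdF.differentiableOn (by norm_num)).differentiableAt
    (isOpen_Ioo.mem_nhds hx)).hasDerivAt

lemma deriv2_eq_on_Ioo (hF : ContDiffOn ℝ 2 F (Set.Icc 0 1)) :
    ∀ x ∈ Set.Ioo (0:ℝ) 1,
      derivWithin (derivWithin F (Set.Icc 0 1)) (Set.Icc 0 1) x = deriv (deriv F) x := by
  intro x hx
  have hmem : Set.Icc (0:ℝ) 1 ∈ 𝓝 x := Icc_mem_nhds hx.1 hx.2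
  rw [derivWithin_of_mem_nhds hmem]
  apply Filter.EventuallyEq.deriv_eq
  filter_upwards [Ioo_mem_nhds hx.1 hx.2] with y hy
  exact derivWithin_of_mem_nhds (Icc_mem_nhds hy.1 hy.2)

lemma contOn_deriv2 (hF : ContDiffOn ℝ 2 F (Set.Icc 0 1)) :
    ContinuousOn (derivWithin (derivWithin F (Set.Icc 0 1)) (Set.Icc 0 1)) (Set.Icc 0 1) := by
  have hu : UniqueDiffOn ℝ (Set.Icc (0:ℝ) 1) := uniqueDiffOn_Icc (by norm_num)
  have h1 : ContDiffOn ℝ 1 (derivWithin F (Set.Icc 0 1)) (Set.Icc 0 1) :=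
    hF.derivWithin hu (by norm_num)
  exact h1.continuousOn_derivWithin hu le_rfl

lemma continuousAt_deriv2 (hF : ContDiffOn ℝ 2 F (Set.Icc 0 1)) :
    ContinuousAt (deriv (deriv F)) (1/2) := by
  have h1 : ContinuousAt (derivWithin (derivWithin F (Set.Icc 0 1)) (Set.Icc 0 1)) (1/2) :=
    (contOn_deriv2 hF (1/2) (by norm_num)).continuousAt
      (Icc_mem_nhds (by norm_num) (by norm_num))
  apply h1.congr
  filter_upwards [Ioo_mem_nhds (by norm_num : (0:ℝ) < 1/2) (by norm_num : (1:ℝ)/2 < 1)] with y hy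
  exact deriv2_eq_on_Ioo hF y hy

lemma bound_deriv2 (hF : ContDiffOn ℝ 2 F (Set.Icc 0 1)) :
    ∃ K : ℝ, 0 ≤ K ∧ ∀ x ∈ Set.Ioo (0:ℝ) 1, |deriv (deriv F) x| ≤ K := by
  obtain ⟨K, hK⟩ := isCompact_Icc.exists_bound_of_continuousOn (contOn_deriv2 hF)
  refine ⟨K, le_trans (norm_nonneg _) (hK (1/2) (by norm_num)), fun x hx => ?_⟩
  rw [← deriv2_eq_on_Ioo hF x hx]
  exact hK x (Set.Ioo_subset_Icc_self hx)

lemma taylor_limit (hF : ContDiffOn ℝ 2 F (Set.Icc 0 1)) :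
    Tendsto (fun h : ℝ => (F (1/2 + h) - F (1/2) - deriv F (1/2) * h) / h^2)
      (𝓝[≠] (0:ℝ)) (𝓝 (deriv (deriv F) (1/2) / 2)) := by
  rw [Metric.tendsto_nhdsWithin_nhds]
  intro ε hε
  obtain ⟨δ₁, hδ₁, hball⟩ := Metric.continuousAt_iff.1 (continuousAt_deriv2 hF) (ε/2)
    (by linarith)
  refine ⟨min δ₁ (1/4), by positivity, ?_⟩
  intro h hh hdist
  have hne : h ≠ 0 := hh
  have habs : |h| < min δ₁ (1/4) := by simpa [Real.dist_eq] using hdist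
  have hsub : Metric.ball (1/2 : ℝ) (min δ₁ (1/4)) ⊆ Set.Ioo (0:ℝ) 1 := by
    intro y hy
    rw [Metric.mem_ball, Real.dist_eq] at hy
    have h2 : |y - 1/2| < 1/4 := lt_of_lt_of_le hy (min_le_right _ _)
    have h3 := abs_lt.1 h2
    constructor <;> [linarith [h3.1]; linarith [h3.2]]
  have hmem : (1/2 : ℝ) ∈ Metric.ball (1/2 : ℝ) (min δ₁ (1/4)) :=
    Metric.mem_ball_self (by positivity)
  have hKs : ∀ x ∈ Metric.ball (1/2 : ℝ) (min δ₁ (1/4)),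
      |deriv (deriv F) x - deriv (deriv F) (1/2)| ≤ ε/2 := by
    intro x hx
    rw [Metric.mem_ball] at hx
    have : dist x (1/2 : ℝ) < δ₁ := lt_of_lt_of_le hx (min_le_left _ _)
    exact le_of_lt (by simpa [Real.dist_eq] using hball this)
  have hkey := key_taylor (convex_ball _ _) hmem
    (fun x hx => hasDerivAt_of_mem_Ioo hF x (hsub hx))
    (fun x hx => hasDerivAt_deriv_of_mem_Ioo hF x (hsub hx)) hKs
  have hxs : (1/2 + h : ℝ) ∈ Metric.ball (1/2 : ℝ) (min δ₁ (1/4)) := by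
    rw [Metric.mem_ball, Real.dist_eq, add_sub_cancel_left]
    exact habs
  have hb := hkey (1/2 + h) hxs
  simp only [add_sub_cancel_left] at hb
  rw [Real.dist_eq]
  have hh2 : (0:ℝ) < h^2 := by positivity
  have hdiv : (F (1/2 + h) - F (1/2) - deriv F (1/2) * h) / h^2 - deriv (deriv F) (1/2)/2
      = (F (1/2 + h) - F (1/2) - deriv F (1/2) * h - deriv (deriv F) (1/2)/2 * h^2) / h^2 := by
    field_simp
  rw [hdiv, abs_div, abs_of_pos hh2]
  calc |F (1/2 + h) - F (1/2) - deriv F (1/2) * h - deriv (deriv F) (1/2)/2 * h^2| / h^2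
      ≤ (ε/2 * h^2) / h^2 := by gcongr
    _ = ε/2 := by field_simp
    _ < ε := by linarith

end facts

lemma alg_id (P b z t s st : ℝ) (hs : 0 < s) (hst : 0 < st) (hst2 : st^2 = t) :
    t * (P - b*(-(1/(2*st)))*z)
      = t*(P - b*((1/2 - z/2/s) - 1/2)) + (b*z/2)*(st - t/s) := by
  subst hst2
  field_simp
  ring

lemma alg_bounds (z t s st : ℝ) (hs2 : s^2 = z^2 + t) (hst2 : st^2 = t)
    (hs : 0 < s) (hst : 0 < st) (hsle : st ≤ s) :
    0 ≤ st - t/s ∧ st - t/s ≤ z^2/(2*st) := by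
  subst hst2
  constructor
  · rw [sub_nonneg, div_le_iff₀ hs]
    nlinarith
  · have h1 : st - st^2/s = (st*s - st^2)/s := by field_simp
    rw [h1, div_le_div_iff₀ hs (by positivity)]
    have hz2 : z^2 = s^2 - st^2 := by linarith
    rw [hz2]
    nlinarith [mul_nonneg (mul_nonneg (sub_nonneg.2 hsle) (sub_nonneg.2 hsle))
      (le_of_lt (by positivity : (0:ℝ) < s + 2*st))]

lemma alg_sq (z t s : ℝ) (hs2 : s^2 = z^2+t) (hs : 0 < s) :
    (1/2 - z/2/s - 1/2)^2 = z^2/(4*(z^2+t)) := by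
  rw [← hs2]
  field_simp
  ring

lemma theta_mem (z t s : ℝ) (ht : 0 < t) (hs2 : s^2 = z^2+t) (hs : 0 < s) :
    1/2 - z/2/s ∈ Set.Ioo (0:ℝ) 1 := by
  have hzs : |z| < s := by
    have h1 : z^2 < s^2 := by nlinarith
    have := Real.sqrt_lt_sqrt (sq_nonneg z) h1
    rwa [Real.sqrt_sq_eq_abs, Real.sqrt_sq hs.le] at this
  have h2 : z < s := lt_of_le_of_lt (le_abs_self z) hzs
  have h3 : -s < z := by
    have := neg_abs_le z
    linarith
  constructor
  · have : z/2/s < 1/2 := by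
      rw [div_div, div_lt_iff₀ (by positivity)]
      linarith
    linarith
  · have : -(1/2) < z/2/s := by
      rw [div_div, lt_div_iff₀ (by positivity)]
      linarith
    linarith

lemma abs_cube_le (z : ℝ) : |z| * z^2 ≤ z^2 + z^4 := by
  rw [show z^4 = |z|^4 by rw [show z^4 = (z^2)^2 by ring, show |z|^4 = (|z|^2)^2 by ring, sq_abs], show z^2 = |z|^2 from (sq_abs z).symm]
  nlinarith [mul_nonneg (sq_nonneg (|z| - 1/2)) (sq_nonneg (|z|)), sq_nonneg (|z|),
    abs_nonneg z]

lemma quad_bound {F : ℝ → ℝ} (hF : ContDiffOn ℝ 2 F (Set.Icc 0 1)) :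
    ∃ K : ℝ, 0 ≤ K ∧ ∀ x ∈ Set.Ioo (0:ℝ) 1,
      |F x - F (1/2) - deriv F (1/2) * (x - 1/2)| ≤ K * (x - 1/2)^2 := by
  obtain ⟨K, hK0, hK⟩ := bound_deriv2 hF
  set c := deriv (deriv F) (1/2) with hc
  have hkey := key_taylor (c := c) (K := K + |c|) (convex_Ioo (0:ℝ) 1)
    (by norm_num : (1/2:ℝ) ∈ Set.Ioo (0:ℝ) 1)
    (hasDerivAt_of_mem_Ioo hF) (hasDerivAt_deriv_of_mem_Ioo hF)
    (fun x hx => by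
      have h1 := hK x hx
      have h2 : |deriv (deriv F) x - c| ≤ |deriv (deriv F) x| + |c| := abs_sub _ _
      linarith)
  refine ⟨K + |c| + |c|/2, by positivity, fun x hx => ?_⟩
  have h1 := hkey x hx
  have h2 : |F x - F (1/2) - deriv F (1/2) * (x - 1/2)|
      ≤ |F x - F (1/2) - deriv F (1/2) * (x - 1/2) - c/2 * (x - 1/2)^2|
        + |c/2 * (x-1/2)^2| := by
    have h3 := abs_add_le (F x - F (1/2) - deriv F (1/2)*(x-1/2) - c/2*(x-1/2)^2)
      (c/2*(x-1/2)^2)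
    have h4 : F x - F (1/2) - deriv F (1/2)*(x-1/2) - c/2*(x-1/2)^2 + c/2*(x-1/2)^2
        = F x - F (1/2) - deriv F (1/2)*(x-1/2) := by ring
    rw [h4] at h3
    exact h3
  have h5 : |c/2 * (x-1/2)^2| = |c|/2 * (x-1/2)^2 := by
    rw [abs_mul, abs_of_nonneg (sq_nonneg (x - 1/2 : ℝ)), abs_div, abs_two]
  have h6 : (0:ℝ) ≤ (x - 1/2)^2 := sq_nonneg _
  rw [h5] at h2
  linarith

lemma tendsto_sqrt_nat : Tendsto (fun n : ℕ => Real.sqrt n) atTop atTop := by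
  apply tendsto_atTop_atTop.2
  intro bb
  refine ⟨⌈bb^2⌉₊, fun n hn => ?_⟩
  have h1 : bb^2 ≤ (n:ℝ) := le_trans (Nat.le_ceil _) (by exact_mod_cast hn)
  calc bb ≤ |bb| := le_abs_self bb
    _ = Real.sqrt (bb^2) := (Real.sqrt_sq_eq_abs bb).symm
    _ ≤ Real.sqrt n := Real.sqrt_le_sqrt h1

lemma tendsto_div_sqrt_nat (a : ℝ) :
    Tendsto (fun n : ℕ => a / Real.sqrt n) atTop (𝓝 0) := by
  have h := tendsto_sqrt_nat.inv_tendsto_atTop.const_mul a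
  simpa [div_eq_mul_inv] using h

/-- The standard normal density `φ(x) = (2π)^{-1/2} exp(−x²/2)`. -/
noncomputable def gaussPdf (x : ℝ) : ℝ :=
  (Real.sqrt (2 * Real.pi))⁻¹ * Real.exp (-(x ^ 2) / 2)

lemma gaussPdf_nonneg (x : ℝ) : 0 ≤ gaussPdf x := by unfold gaussPdf; positivity

lemma gaussPdf_continuous : Continuous gaussPdf := by
  unfold gaussPdf
  exact continuous_const.mul ((((continuous_pow 2 : Continuous fun x : ℝ => x ^ 2)).neg.div_const 2).rexp)

lemma integral_sq_gaussPdf : ∫ z : ℝ, z^2 * gaussPdf z = 1 := by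
  have h1 : (fun z : ℝ => z^2 * gaussPdf z)
      = fun z => (Real.sqrt (2*π))⁻¹ * (z^2 * Real.exp (-(z^2)/2)) := by
    funext z; unfold gaussPdf; ring
  rw [h1, integral_const_mul, integral_sq_exp_gauss, inv_mul_cancel₀]
  exact (Real.sqrt_pos.2 (by positivity)).ne'

set_option maxHeartbeats 1000000 in
/-- Limit of the integrated scaled Taylor remainder: if `F` is twice continuously
differentiable on `[0,1]`, `θ(z;t) = 1/2 − (z/2)/√(z² + t)`, and
`R(z;t) = F(θ(z;t)) − F(1/2) − F'(1/2)·θ'(0;t)·z` with `θ'(0;t) = −1/(2√t)`,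
then `∫_{−∞}^{∞} t·R(z;t)·φ(z) dz → (1/8)·F''(1/2)` as `t → ∞`. -/
theorem taylor_remainder_integral_limit
    (F : ℝ → ℝ) (hF : ContDiffOn ℝ 2 F (Set.Icc 0 1)) :
    Tendsto
      (fun t : ℕ => ∫ z : ℝ,
        (t : ℝ) *
          (F (1/2 - (z/2) / Real.sqrt (z^2 + t)) - F (1/2)
            - deriv F (1/2) * (-(1 / (2 * Real.sqrt t))) * z) * gaussPdf z)
      atTop (𝓝 ((1/8) * deriv (deriv F) (1/2))) := by
  obtain ⟨K₀, hK₀0, hK₀⟩ := quad_bound hF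
  set b : ℝ := deriv F (1/2) with hbdef
  set c : ℝ := deriv (deriv F) (1/2) with hcdef
  have hfacts : ∀ (t z : ℝ), 1 ≤ t →
      0 < Real.sqrt (z^2+t) ∧ 0 < Real.sqrt t ∧ Real.sqrt t ≤ Real.sqrt (z^2+t)
        ∧ (Real.sqrt (z^2+t))^2 = z^2 + t ∧ (Real.sqrt t)^2 = t := by
    intro t z ht
    have h0 : (0:ℝ) ≤ z^2 + t := by nlinarith [sq_nonneg z]
    exact ⟨Real.sqrt_pos.2 (by nlinarith [sq_nonneg z]), Real.sqrt_pos.2 (by linarith),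
      Real.sqrt_le_sqrt (by nlinarith [sq_nonneg z]), Real.sq_sqrt h0,
      Real.sq_sqrt (by linarith)⟩
  -- uniform bound
  have hbd : ∀ (t z : ℝ), 1 ≤ t →
      |t * (F (1/2 - z/2 / Real.sqrt (z^2 + t)) - F (1/2)
        - b * (-(1/(2*Real.sqrt t))) * z)|
        ≤ K₀/4 * z^2 + |b|/4 * (z^2 + z^4) := by
    intro t z ht
    obtain ⟨hs, hst, hsle, hs2, hst2⟩ := hfacts t z ht
    have hid := alg_id (F (1/2 - z/2/Real.sqrt (z^2+t)) - F (1/2)) b z t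
      (Real.sqrt (z^2+t)) (Real.sqrt t) hs hst hst2
    obtain ⟨hA0, hA⟩ := alg_bounds z t (Real.sqrt (z^2+t)) (Real.sqrt t) hs2 hst2 hs hst hsle
    have hmem := theta_mem z t (Real.sqrt (z^2+t)) (by linarith) hs2 hs
    have hN := hK₀ _ hmem
    have hsq := alg_sq z t (Real.sqrt (z^2+t)) hs2 hs
    have ht0 : (0:ℝ) ≤ t := by linarith
    have hzt : (0:ℝ) < z^2 + t := by nlinarith [sq_nonneg z]
    have h1 : |t * (F (1/2 - z/2/Real.sqrt (z^2+t)) - F (1/2)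
        - b * ((1/2 - z/2/Real.sqrt (z^2+t)) - 1/2))| ≤ K₀/4 * z^2 := by
      rw [abs_mul, abs_of_nonneg ht0]
      calc t * |F (1/2 - z/2/Real.sqrt (z^2+t)) - F (1/2)
            - b * ((1/2 - z/2/Real.sqrt (z^2+t)) - 1/2)|
          ≤ t * (K₀ * (1/2 - z/2/Real.sqrt (z^2+t) - 1/2)^2) :=
            mul_le_mul_of_nonneg_left hN ht0
        _ = t * (K₀ * (z^2/(4*(z^2+t)))) := by rw [hsq]
        _ = K₀/4 * z^2 * (t/(z^2+t)) := by field_simp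
        _ ≤ K₀/4 * z^2 * 1 := by
            apply mul_le_mul_of_nonneg_left _ (by positivity)
            rw [div_le_one hzt]; nlinarith [sq_nonneg z]
        _ = K₀/4 * z^2 := mul_one _
    have h2 : |(b*z/2) * (Real.sqrt t - t/Real.sqrt (z^2+t))| ≤ |b|/4 * (z^2 + z^4) := by
      rw [abs_mul, abs_of_nonneg hA0]
      have h3 : |b*z/2| = |b| * |z| / 2 := by rw [abs_div, abs_mul, abs_two]
      rw [h3]
      have hst1 : (1:ℝ) ≤ Real.sqrt t := by nlinarith
      have h4 : Real.sqrt t - t/Real.sqrt (z^2+t) ≤ z^2/2 := by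
        apply le_trans hA
        apply div_le_div_of_nonneg_left (sq_nonneg z) (by norm_num)
        linarith
      calc |b| * |z| / 2 * (Real.sqrt t - t/Real.sqrt (z^2+t))
          ≤ |b| * |z| / 2 * (z^2/2) := mul_le_mul_of_nonneg_left h4 (by positivity)
        _ = |b|/4 * (|z| * z^2) := by ring
        _ ≤ |b|/4 * (z^2 + z^4) :=
            mul_le_mul_of_nonneg_left (abs_cube_le z) (by positivity)
    calc |t * (F (1/2 - z/2/Real.sqrt (z^2+t)) - F (1/2) - b * (-(1/(2*Real.sqrt t))) * z)|
        = |t * (F (1/2 - z/2/Real.sqrt (z^2+t)) - F (1/2)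
            - b * ((1/2 - z/2/Real.sqrt (z^2+t)) - 1/2))
          + (b*z/2) * (Real.sqrt t - t/Real.sqrt (z^2+t))| := by rw [hid]
      _ ≤ |t * (F (1/2 - z/2/Real.sqrt (z^2+t)) - F (1/2)
            - b * ((1/2 - z/2/Real.sqrt (z^2+t)) - 1/2))|
          + |(b*z/2) * (Real.sqrt t - t/Real.sqrt (z^2+t))| := abs_add_le _ _
      _ ≤ K₀/4 * z^2 + |b|/4 * (z^2 + z^4) := add_le_add h1 h2
  -- measurability
  have hmeas : ∀ᶠ (n:ℕ) in atTop, AEStronglyMeasurable (fun z : ℝ => (n : ℝ) *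
      (F (1/2 - (z/2) / Real.sqrt (z^2 + n)) - F (1/2)
        - b * (-(1 / (2 * Real.sqrt n))) * z) * gaussPdf z) volume := by
    filter_upwards [eventually_ge_atTop 1] with n hn
    have h1n : (1:ℝ) ≤ (n:ℝ) := by exact_mod_cast hn
    have hsc : Continuous fun z : ℝ => Real.sqrt (z^2 + (n:ℝ)) :=
      Real.continuous_sqrt.comp ((continuous_pow 2).add continuous_const)
    have hθc : Continuous fun z : ℝ => 1/2 - z/2/Real.sqrt (z^2+(n:ℝ)) := by
      apply continuous_const.sub
      apply Continuous.div (continuous_id.div_const 2) hsc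
      intro z
      exact (hfacts n z h1n).1.ne'
    have hFc : Continuous fun z : ℝ => F (1/2 - z/2/Real.sqrt (z^2+(n:ℝ))) := by
      apply (hF.continuousOn).comp_continuous hθc
      intro z
      obtain ⟨hs, hst, hsle, hs2, hst2⟩ := hfacts n z h1n
      exact Set.Ioo_subset_Icc_self (theta_mem z n (Real.sqrt (z^2+(n:ℝ))) (by linarith) hs2 hs)
    exact ((continuous_const.mul ((hFc.sub continuous_const).sub
      (continuous_const.mul continuous_id))).mul gaussPdf_continuous).aestronglyMeasurable
  -- bound
  have h_bound : ∀ᶠ (n:ℕ) in atTop, ∀ᵐ z : ℝ, ‖(n : ℝ) *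
      (F (1/2 - (z/2) / Real.sqrt (z^2 + n)) - F (1/2)
        - b * (-(1 / (2 * Real.sqrt n))) * z) * gaussPdf z‖
      ≤ (K₀/4 * z^2 + |b|/4*(z^2+z^4)) * gaussPdf z := by
    filter_upwards [eventually_ge_atTop 1] with n hn
    apply ae_of_all
    intro z
    have h1n : (1:ℝ) ≤ (n:ℝ) := by exact_mod_cast hn
    rw [norm_mul, Real.norm_eq_abs, Real.norm_eq_abs, abs_of_nonneg (gaussPdf_nonneg z)]
    exact mul_le_mul_of_nonneg_right (hbd n z h1n) (gaussPdf_nonneg z)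
  -- bound integrable
  have hbound_int : Integrable (fun z : ℝ => (K₀/4 * z^2 + |b|/4*(z^2+z^4)) * gaussPdf z) := by
    have h1 : (fun z : ℝ => (K₀/4 * z^2 + |b|/4*(z^2+z^4)) * gaussPdf z)
        = fun z => ((K₀/4 + |b|/4) * (Real.sqrt (2*π))⁻¹) * (z^2 * Real.exp (-(z^2)/2))
            + (|b|/4 * (Real.sqrt (2*π))⁻¹) * (z^4 * Real.exp (-(z^2)/2)) := by
      funext z; unfold gaussPdf; ring
    rw [h1]
    exact (((integrable_poly_gauss 2).const_mul _)).add ((integrable_poly_gauss 4).const_mul _)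
  -- pointwise limit
  have h_lim : ∀ᵐ z : ℝ, Tendsto (fun n : ℕ => (n : ℝ) *
      (F (1/2 - (z/2) / Real.sqrt (z^2 + n)) - F (1/2)
        - b * (-(1 / (2 * Real.sqrt n))) * z) * gaussPdf z) atTop
      (𝓝 (c/8 * (z^2 * gaussPdf z))) := by
    apply ae_of_all
    intro z
    by_cases hz : z = 0
    · subst hz
      have h0 : (fun n : ℕ => (n : ℝ) *
          (F (1/2 - ((0:ℝ)/2) / Real.sqrt (0^2 + n)) - F (1/2)
            - b * (-(1 / (2 * Real.sqrt n))) * 0) * gaussPdf 0) = fun _ => 0 := by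
        funext n; norm_num
      rw [h0]
      norm_num
    · have hslim : Tendsto (fun n : ℕ => -(z/2)/Real.sqrt (z^2+(n:ℝ))) atTop (𝓝[≠] 0) := by
        rw [tendsto_nhdsWithin_iff]
        constructor
        · apply squeeze_zero_norm' ?_ (tendsto_div_sqrt_nat (|z|/2))
          filter_upwards [eventually_ge_atTop 1] with n hn
          have h1n : (1:ℝ) ≤ (n:ℝ) := by exact_mod_cast hn
          obtain ⟨hs, hst, hsle, hs2, hst2⟩ := hfacts n z h1n
          rw [Real.norm_eq_abs, abs_div, abs_neg, abs_div, abs_two,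
            abs_of_pos hs]
          apply div_le_div_of_nonneg_left (by positivity) hst hsle
        · filter_upwards [eventually_ge_atTop 1] with n hn
          have h1n : (1:ℝ) ≤ (n:ℝ) := by exact_mod_cast hn
          obtain ⟨hs, _, _, _, _⟩ := hfacts n z h1n
          simp only [Set.mem_compl_iff, Set.mem_singleton_iff]
          exact div_ne_zero (neg_ne_zero.2 (div_ne_zero hz two_ne_zero)) hs.ne'
      have hqlim : Tendsto (fun n : ℕ =>
          (F (1/2 + -(z/2)/Real.sqrt (z^2+(n:ℝ))) - F (1/2)
            - b * (-(z/2)/Real.sqrt (z^2+(n:ℝ))))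
            / (-(z/2)/Real.sqrt (z^2+(n:ℝ)))^2) atTop (𝓝 (c/2)) := by
        exact (taylor_limit hF).comp hslim
      have hfac1 : Tendsto (fun n : ℕ => (n:ℝ)*z^2/(4*(z^2+(n:ℝ)))) atTop (𝓝 (z^2/4)) := by
        have h2 : Tendsto (fun n : ℕ => z^2+(n:ℝ)) atTop atTop :=
          tendsto_atTop_add_const_left _ _ tendsto_natCast_atTop_atTop
        have h1 : Tendsto (fun n : ℕ => z^2/(z^2+(n:ℝ))) atTop (𝓝 0) := by
          simpa [div_eq_mul_inv] using h2.inv_tendsto_atTop.const_mul (z^2)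
        have h3 : Tendsto (fun n : ℕ => z^2/4 * (1 - z^2/(z^2+(n:ℝ)))) atTop
            (𝓝 (z^2/4 * (1-0))) := (tendsto_const_nhds.sub h1).const_mul _
        rw [show (z^2/4 * (1-(0:ℝ)) : ℝ) = z^2/4 by ring] at h3
        apply h3.congr'
        filter_upwards [eventually_ge_atTop 1] with n hn
        have h1n : (1:ℝ) ≤ (n:ℝ) := by exact_mod_cast hn
        have hne : z^2 + (n:ℝ) ≠ 0 := by nlinarith [sq_nonneg z]
        field_simp
        ring
      have hT2 : Tendsto (fun n : ℕ =>
          (b*z/2)*(Real.sqrt (n:ℝ) - (n:ℝ)/Real.sqrt (z^2+(n:ℝ)))) atTop (𝓝 0) := by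
        have hb0 : Tendsto (fun n : ℕ => |b*z/2| * (z^2/(2*Real.sqrt (n:ℝ)))) atTop (𝓝 0) := by
          have h := (tendsto_div_sqrt_nat (z^2/2)).const_mul (|b*z/2|)
          simpa [div_div] using h
        apply squeeze_zero_norm' ?_ hb0
        filter_upwards [eventually_ge_atTop 1] with n hn
        have h1n : (1:ℝ) ≤ (n:ℝ) := by exact_mod_cast hn
        obtain ⟨hs, hst, hsle, hs2, hst2⟩ := hfacts n z h1n
        obtain ⟨hA0, hA⟩ := alg_bounds z n _ _ hs2 hst2 hs hst hsle
        rw [Real.norm_eq_abs, abs_mul, abs_of_nonneg hA0]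
        exact mul_le_mul_of_nonneg_left hA (abs_nonneg _)
      have hsum : Tendsto (fun n : ℕ =>
          ((n:ℝ)*z^2/(4*(z^2+(n:ℝ)))
            * ((F (1/2 + -(z/2)/Real.sqrt (z^2+(n:ℝ))) - F (1/2)
                - b * (-(z/2)/Real.sqrt (z^2+(n:ℝ))))
               / (-(z/2)/Real.sqrt (z^2+(n:ℝ)))^2)
            + (b*z/2)*(Real.sqrt (n:ℝ) - (n:ℝ)/Real.sqrt (z^2+(n:ℝ)))) * gaussPdf z)
          atTop (𝓝 ((z^2/4 * (c/2) + 0) * gaussPdf z)) :=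
        ((hfac1.mul hqlim).add hT2).mul_const _
      rw [show (z^2/4*(c/2) + 0)*gaussPdf z = c/8*(z^2*gaussPdf z) by ring] at hsum
      apply hsum.congr'
      filter_upwards [eventually_ge_atTop 1] with n hn
      have h1n : (1:ℝ) ≤ (n:ℝ) := by exact_mod_cast hn
      obtain ⟨hs, hst, hsle, hs2, hst2⟩ := hfacts n z h1n
      have hid := alg_id (F (1/2 - z/2/Real.sqrt (z^2+(n:ℝ))) - F (1/2)) b z n
        (Real.sqrt (z^2+(n:ℝ))) (Real.sqrt (n:ℝ)) hs hst hst2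
      have hsq := alg_sq z n (Real.sqrt (z^2+(n:ℝ))) hs2 hs
      have hhne : -(z/2)/Real.sqrt (z^2+(n:ℝ)) ≠ 0 :=
        div_ne_zero (neg_ne_zero.2 (div_ne_zero hz two_ne_zero)) hs.ne'
      have harg : 1/2 + -(z/2)/Real.sqrt (z^2+(n:ℝ)) = 1/2 - z/2/Real.sqrt (z^2+(n:ℝ)) := by
        ring
      rw [harg]
      have hNh : (n:ℝ)*z^2/(4*(z^2+(n:ℝ)))
          * ((F (1/2 - z/2/Real.sqrt (z^2+(n:ℝ))) - F (1/2)
              - b * (-(z/2)/Real.sqrt (z^2+(n:ℝ))))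
             / (-(z/2)/Real.sqrt (z^2+(n:ℝ)))^2)
          = (n:ℝ) * (F (1/2 - z/2/Real.sqrt (z^2+(n:ℝ))) - F (1/2)
              - b * ((1/2 - z/2/Real.sqrt (z^2+(n:ℝ))) - 1/2)) := by
        have h9 : b * (-(z/2)/Real.sqrt (z^2+(n:ℝ)))
            = b * ((1/2 - z/2/Real.sqrt (z^2+(n:ℝ))) - 1/2) := by ring
        have h8 : (-(z/2)/Real.sqrt (z^2+(n:ℝ)))^2 = z^2/(4*(z^2+(n:ℝ))) := by
          rw [show (-(z/2)/Real.sqrt (z^2+(n:ℝ)))^2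
            = (1/2 - z/2/Real.sqrt (z^2+(n:ℝ)) - 1/2)^2 by ring, hsq]
        rw [h9, h8]
        have hzt : (0:ℝ) < z^2 + (n:ℝ) := by nlinarith [sq_nonneg z]
        have hz2 : z^2 ≠ 0 := pow_ne_zero 2 hz
        field_simp
      rw [hNh, ← hid]
  -- apply dominated convergence
  have hmain := tendsto_integral_filter_of_dominated_convergence
    (μ := volume) (bound := fun z => (K₀/4 * z^2 + |b|/4*(z^2+z^4)) * gaussPdf z)
    hmeas h_bound hbound_int h_lim
  have hval : ∫ z : ℝ, c/8 * (z^2 * gaussPdf z) = 1/8 * c := by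
    rw [integral_const_mul, integral_sq_gaussPdf]
    ring
  rwa [hval] at hmain
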